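/- Let x and y be real numbers with 0 < x ≤ 1 and 0 < y ≤ 1. Then |log₂((1 + y)/(1 + x))| ≤ |log₂(y/x)|. (The alternative discrimination construct I''_Dis(σ) = log₂((1 + b'(σ))/(1 + b(σ))) cuts down the discrimination of the Kullback–Leibler construct I_Dis(σ) = log₂(b'(σ)/b(σ)).) -/
import Mathlib

lemma key_aux (x y : ℝ) (hx0 : 0 < x) (hy0 : 0 < y) (hxy : x ≤ y) :
    |Real.log ((1 + y) / (1 + x))| ≤ |Real.log (y / x)| := by
  have h1x : (0:ℝ) < 1 + x := by linarith
  have h1y : (0:ℝ) < 1 + y := by linarith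
  have ha : (1:ℝ) ≤ (1 + y) / (1 + x) := (one_le_div h1x).mpr (by linarith)
  have hb : (1:ℝ) ≤ y / x := (one_le_div hx0).mpr hxy
  rw [abs_of_nonneg (Real.log_nonneg ha), abs_of_nonneg (Real.log_nonneg hb)]
  apply Real.log_le_log (by linarith)
  rw [div_le_div_iff₀ h1x hx0]
  nlinarith

/-- The alternative discrimination construct cuts down the
Kullback–Leibler discrimination: for 0 < x ≤ 1 and 0 < y ≤ 1,
|log₂((1 + y)/(1 + x))| ≤ |log₂(y/x)|. -/
theorem stmt_18 (x y : ℝ) (hx0 : 0 < x) (hx1 : x ≤ 1) (hy0 : 0 < y) (hy1 : y ≤ 1) :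
    |Real.logb 2 ((1 + y) / (1 + x))| ≤ |Real.logb 2 (y / x)| := by
  have hl2 : (0:ℝ) < Real.log 2 := Real.log_pos (by norm_num)
  have key : |Real.log ((1 + y) / (1 + x))| ≤ |Real.log (y / x)| := by
    rcases le_total x y with h | h
    · exact key_aux x y hx0 hy0 h
    · have e1 : Real.log ((1 + y) / (1 + x)) = -Real.log ((1 + x) / (1 + y)) := by
        rw [← Real.log_inv, inv_div]
      have e2 : Real.log (y / x) = -Real.log (x / y) := by
        rw [← Real.log_inv, inv_div]
      rw [e1, e2, abs_neg, abs_neg]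
      exact key_aux y x hy0 hx0 h
  simp only [Real.logb, abs_div]
  exact div_le_div_of_nonneg_right key (by positivity) |>.trans_eq (by rw [abs_of_pos hl2]) |>.trans (le_of_eq (by rw [abs_of_pos hl2]))
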